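/- Let G be the subgroup of (ℂˣ)³ consisting of all triples (α,β,γ) with α⁴ = β⁴ = γ⁴ = αβγ, and let i ∈ ℂ be a primitive 4th root of unity. Then G is exactly the subgroup generated by the two elements (i, i³, 1) and (1, i, i³); moreover G has order 16 and is isomorphic to ℤ/4 × ℤ/4. (This identifies the local quotient model at the singular point of Z in degree 4: the coarse moduli of the chart w ≠ 0 is 𝔸³/⟨(1/4)(1,3,0), (1/4)(0,1,3)⟩.) -/

import Mathlib

/-!
Write `t = αβγ`. If `α⁴ = β⁴ = γ⁴ = t` then `t⁴ = α⁴β⁴γ⁴ = t³`, so `t = 1`: the group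
consists of the triples of 4th roots of unity with product `1`. Such a triple is determined
by `(α, γ)`, and `(x, y) ↦ (x, x⁻¹y, y⁻¹)` maps `μ₄ × μ₄ ≅ ℤ/4 × ℤ/4` isomorphically onto it,
sending the generators `(i, 1)` and `(1, i)` to `(i, i³, 1)` and `(1, i, i³)`.
-/

open Subgroup

theorem Subgroup.closure_pair_eq_zpowers_prod_zpowers {G N : Type*} [Group G] [Group N]
    (a : G) (b : N) : closure {(a, 1), (1, b)} = (zpowers a).prod (zpowers b) := by
  apply le_antisymm
  · rw [closure_le]
    rintro _ (rfl | rfl)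
    exacts [⟨mem_zpowers a, one_mem _⟩, ⟨one_mem _, mem_zpowers b⟩]
  · rintro ⟨x, y⟩ ⟨⟨m, rfl⟩, ⟨n, rfl⟩⟩
    have hxy : ((a ^ m, b ^ n) : G × N) = (a, 1) ^ m * (1, b) ^ n := by simp
    rw [hxy]
    exact mul_mem (zpow_mem (subset_closure (by simp)) _) (zpow_mem (subset_closure (by simp)) _)

section CommGroup

variable {M : Type*} [CommGroup M]

theorem pow_four_eq_pow_four_eq_mul_iff {a b c : M} :
    a ^ 4 = b ^ 4 ∧ b ^ 4 = c ^ 4 ∧ c ^ 4 = a * b * c ↔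
      a ^ 4 = 1 ∧ c ^ 4 = 1 ∧ a * b * c = 1 := by
  constructor
  · rintro ⟨hab, hbc, hc⟩
    have ht : (a * b * c) ^ 3 * (a * b * c) = (a * b * c) ^ 3 :=
      calc _ = a ^ 4 * b ^ 4 * c ^ 4 := by rw [← pow_succ, mul_pow, mul_pow]
        _ = (a * b * c) ^ 3 := by rw [hab, hbc, hc, pow_three']
    have ht1 : a * b * c = 1 := mul_eq_left.mp ht
    exact ⟨by rw [hab, hbc, hc, ht1], by rw [hc, ht1], ht1⟩
  · rintro ⟨ha, hc, ht⟩
    have hb : b = (a * c)⁻¹ :=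
      eq_inv_of_mul_eq_one_left (by rwa [mul_left_comm, ← mul_assoc])
    have hb4 : b ^ 4 = 1 := by rw [hb, inv_pow, mul_pow, ha, hc, mul_one, inv_one]
    exact ⟨by rw [ha, hb4], by rw [hb4, hc], by rw [hc, ht]⟩

def tripleOfPair : M × M →* M × M × M :=
  (MonoidHom.fst M M).prod
    (((MonoidHom.fst M M)⁻¹ * MonoidHom.snd M M).prod (MonoidHom.snd M M)⁻¹)

@[simp]
theorem tripleOfPair_apply (p : M × M) : tripleOfPair p = (p.1, p.1⁻¹ * p.2, p.2⁻¹) := rfl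

theorem tripleOfPair_injective : Function.Injective (tripleOfPair (M := M)) := by
  intro p q h
  simp only [tripleOfPair_apply, Prod.mk.injEq, inv_inj] at h
  exact Prod.ext h.1 h.2.2

theorem mem_map_tripleOfPair_prod_iff {T : Subgroup M} {g : M × M × M} :
    g ∈ (T.prod T).map tripleOfPair ↔ g.1 ∈ T ∧ g.2.2 ∈ T ∧ g.1 * g.2.1 * g.2.2 = 1 := by
  constructor
  · rintro ⟨p, ⟨h1, h2⟩, rfl⟩
    exact ⟨h1, T.inv_mem h2, by simp⟩
  · rintro ⟨h1, h3, hg⟩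
    refine ⟨(g.1, g.2.2⁻¹), ⟨h1, T.inv_mem h3⟩, ?_⟩
    have hb : g.1⁻¹ * g.2.2⁻¹ = g.2.1 := by
      rwa [← mul_inv, inv_eq_iff_mul_eq_one, mul_right_comm]
    simp [hb]

theorem closure_generators_eq_map_tripleOfPair (u : M) :
    closure {(u, u⁻¹, 1), (1, u, u⁻¹)} =
      ((zpowers u).prod (zpowers u)).map tripleOfPair := by
  rw [← closure_pair_eq_zpowers_prod_zpowers, MonoidHom.map_closure, Set.image_pair]
  simp

end CommGroup

/-- The stabilizer group `G = {(α,β,γ) ∈ (ℂˣ)³ : α⁴ = β⁴ = γ⁴ = αβγ}` is exactly the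
subgroup generated by `(i, i³, 1)` and `(1, i, i³)` (where `i` is a primitive 4th root
of unity), has order 16, and is isomorphic to `ℤ/4 × ℤ/4`. -/
theorem degree_four_stabilizer_group (i : ℂ) (hi : IsPrimitiveRoot i 4)
    (u : ℂˣ) (hu : (u : ℂ) = i) :
    (∀ g : ℂˣ × ℂˣ × ℂˣ,
        g ∈ Subgroup.closure
            ({(u, u ^ 3, (1 : ℂˣ)), ((1 : ℂˣ), u, u ^ 3)} : Set (ℂˣ × ℂˣ × ℂˣ)) ↔
          (g.1 : ℂ) ^ 4 = (g.2.1 : ℂ) ^ 4 ∧ (g.2.1 : ℂ) ^ 4 = (g.2.2 : ℂ) ^ 4 ∧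
            (g.2.2 : ℂ) ^ 4 = (g.1 : ℂ) * (g.2.1 : ℂ) * (g.2.2 : ℂ)) ∧
    Nat.card (Subgroup.closure
        ({(u, u ^ 3, (1 : ℂˣ)), ((1 : ℂˣ), u, u ^ 3)} : Set (ℂˣ × ℂˣ × ℂˣ))) = 16 ∧
    Nonempty ((Subgroup.closure
        ({(u, u ^ 3, (1 : ℂˣ)), ((1 : ℂˣ), u, u ^ 3)} : Set (ℂˣ × ℂˣ × ℂˣ))) ≃*
      Multiplicative (ZMod 4) × Multiplicative (ZMod 4)) := by
  have hpu : IsPrimitiveRoot u 4 := IsPrimitiveRoot.coe_units_iff.mp (hu ▸ hi)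
  have hu3 : u ^ 3 = u⁻¹ := eq_inv_of_mul_eq_one_left (by rw [← pow_succ, hpu.pow_eq_one])
  let μ₄ : Multiplicative (ZMod 4) ≃* zpowers u :=
    AddEquiv.toMultiplicativeLeft hpu.zmodEquivZPowers
  let e : ((zpowers u).prod (zpowers u)).map tripleOfPair ≃*
      Multiplicative (ZMod 4) × Multiplicative (ZMod 4) :=
    (equivMapOfInjective _ _ tripleOfPair_injective).symm.trans
      ((prodEquiv _ _).trans (μ₄.symm.prodCongr μ₄.symm))
  rw [hu3, closure_generators_eq_map_tripleOfPair]
  refine ⟨fun g => ?_, (Nat.card_congr e.toEquiv).trans (by simp), ⟨e⟩⟩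
  simp only [← Units.val_pow_eq_pow_val, ← Units.val_mul, Units.val_inj,
    pow_four_eq_pow_four_eq_mul_iff, mem_map_tripleOfPair_prod_iff, hpu.zpowers_eq,
    mem_rootsOfUnity]
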